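/- arXiv:2101.04092 — 3 statements merged into one kernel-verified Lean document; each statement's English description precedes it below -/
import Mathlib

section
/- Let ĝ : ℝ → ℂ be a continuous function with |ĝ(t)| ≤ K(1+|t|)^k for all t, and suppose ĝ vanishes on (-a/2, a/2) for some a > 0. Define f(z) = -∫_0^∞ ĝ(t) e^{2πizt} dt for Im z > 0 and f(z) = ∫_{-∞}^0 ĝ(t) e^{2πizt} dt for Im z < 0. Then there is a constant C (depending on K, k, a) such that |f(x+iy)| ≤ C(|y|^{-k-1} + |y|^{-1}) e^{-πa|y|} for all x ∈ ℝ and y ≠ 0. -/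
open MeasureTheory SchwartzMap Complex Filter

noncomputable section

/-- Tempered distributions on ℝ. -/
abbrev TemperedDist := SchwartzMap ℝ ℂ →L[ℂ] ℂ

/-- Fourier transform of a tempered distribution. -/
def fourierTD (α : TemperedDist) : TemperedDist :=
  α.comp (SchwartzMap.fourierTransformCLM ℂ)

/-- Action of the p-th derivative of the Dirac delta at x on a test function. -/
def diracDeriv (p : ℕ) (x : ℝ) (φ : SchwartzMap ℝ ℂ) : ℂ :=
  (-1 : ℂ) ^ p * iteratedDeriv p (⇑φ) x

/-- Support of a tempered distribution. -/
def TDsupport (α : TemperedDist) : Set ℝ :=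
  {x : ℝ | ∀ U : Set ℝ, IsOpen U → x ∈ U →
    ∃ φ : SchwartzMap ℝ ℂ, tsupport ⇑φ ⊆ U ∧ α φ ≠ 0}

/-- Uniformly discrete set. -/
def UniformlyDiscrete (Λ : Set ℝ) : Prop :=
  ∃ δ > (0:ℝ), ∀ x ∈ Λ, ∀ y ∈ Λ, x ≠ y → δ ≤ |x - y|

/-- Counting function. -/
def countFn (Λ : Set ℝ) (r : ℝ) : ℝ := (Λ ∩ Set.Icc (-r) r).ncard

/-- Logarithmic lower density. -/
def DK (Λ : Set ℝ) : ℝ :=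
  liminf (fun R : ℝ => (1 / (2 * R)) * ∫ r in (1:ℝ)..R, countFn Λ r / r) atTop

/-- Locally finite set. -/
def LocallyFinite' (Λ : Set ℝ) : Prop :=
  ∀ K : Set ℝ, IsCompact K → (Λ ∩ K).Finite

/-! On the support of `g` the exponential has modulus `exp (-2π|y|t)` with `t ≥ a/2`; shifting
`t ↦ t + a/2` pulls out the factor `exp (-πa|y|)` and leaves a Laplace transform, at `2π|y|`, of a
polynomial of degree `k`, which is `O(|y|^(-k-1) + |y|^(-1))`. The lower half-plane reduces to the
upper one by `t ↦ -t`. -/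

open Set Nat
open scoped Real

section LaplaceBound

variable {E : Type*} [NormedAddCommGroup E] [NormedSpace ℝ E]

theorem setIntegral_Ioi_zero_comp_add_right (f : ℝ → E) (c : ℝ) :
    ∫ s in Ioi 0, f (s + c) = ∫ t in Ioi c, f t := by
  have h := (measurePreserving_add_right volume c).setIntegral_preimage_emb
    (measurableEmbedding_addRight c) f (Ioi c)
  rwa [preimage_add_const_Ioi, sub_self] at h

theorem integral_pow_mul_exp_neg_mul_Ioi (k : ℕ) {b : ℝ} (hb : 0 < b) :
    ∫ s in Ioi 0, s ^ k * Real.exp (-(b * s)) = k ! / b ^ (k + 1) := by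
  have h := Real.integral_rpow_mul_exp_neg_mul_Ioi (a := k + 1) (by positivity) hb
  simp only [add_sub_cancel_right, Real.rpow_natCast, Real.Gamma_nat_eq_factorial] at h
  rw [h, one_div, Real.inv_rpow hb.le, div_eq_mul_inv, mul_comm]
  norm_cast

theorem integrableOn_pow_mul_exp_neg_mul_Ioi (k : ℕ) {b : ℝ} (hb : 0 < b) :
    IntegrableOn (fun s : ℝ => s ^ k * Real.exp (-(b * s))) (Ioi 0) :=
  .of_integral_ne_zero (by rw [integral_pow_mul_exp_neg_mul_Ioi k hb]; positivity)

theorem one_add_add_pow_le (k : ℕ) {s c : ℝ} (hs : 0 ≤ s) (hc : 0 ≤ c) :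
    (1 + (s + c)) ^ k ≤ (1 + c) ^ k * 2 ^ (k - 1) * (1 + s ^ k) := by
  calc (1 + (s + c)) ^ k ≤ ((1 + c) * (1 + s)) ^ k :=
        pow_le_pow_left₀ (by positivity) (by nlinarith [mul_nonneg hc hs]) k
    _ = (1 + c) ^ k * (1 + s) ^ k := mul_pow _ _ _
    _ ≤ (1 + c) ^ k * (2 ^ (k - 1) * (1 ^ k + s ^ k)) := by
        gcongr; exact add_pow_le zero_le_one hs k
    _ = (1 + c) ^ k * 2 ^ (k - 1) * (1 + s ^ k) := by rw [one_pow]; ring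

theorem norm_integral_Ioi_le_of_eq_zero_on_Ioo {F : ℝ → E} {K b c : ℝ} {k : ℕ} (hK : 0 ≤ K)
    (hb : 0 < b) (hc : 0 < c) (hzero : ∀ t ∈ Ioo 0 c, F t = 0)
    (hbound : ∀ t, 0 < t → ‖F t‖ ≤ K * (1 + t) ^ k * Real.exp (-(b * t))) :
    ‖∫ t in Ioi 0, F t‖ ≤
      K * (1 + c) ^ k * 2 ^ (k - 1) * Real.exp (-(b * c)) * (1 / b + k ! / b ^ (k + 1)) := by
  set Q := K * (1 + c) ^ k * 2 ^ (k - 1) * Real.exp (-(b * c))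
  set G := fun s : ℝ => s ^ 0 * Real.exp (-(b * s)) + s ^ k * Real.exp (-(b * s))
  have hshift : ∫ t in Ioi 0, F t = ∫ s in Ioi 0, F (s + c) := by
    rw [setIntegral_Ioi_zero_comp_add_right, ← integral_Ici_eq_integral_Ioi (x := c)]
    exact setIntegral_eq_of_subset_of_forall_sdiff_eq_zero measurableSet_Ioi
      (Ici_subset_Ioi.2 hc) fun t ht => hzero t ⟨ht.1, not_le.1 ht.2⟩
  have hdom : ∀ s ∈ Ioi (0 : ℝ), ‖F (s + c)‖ ≤ Q * G s := by
    intro s (hs : 0 < s)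
    calc ‖F (s + c)‖ ≤ K * (1 + (s + c)) ^ k * Real.exp (-(b * (s + c))) :=
          hbound _ (by positivity)
      _ ≤ K * ((1 + c) ^ k * 2 ^ (k - 1) * (1 + s ^ k)) * Real.exp (-(b * (s + c))) := by
          gcongr; exact one_add_add_pow_le k hs.le hc.le
      _ = Q * G s := by
          rw [show -(b * (s + c)) = -(b * s) + -(b * c) by ring, Real.exp_add]
          simp only [Q, G, pow_zero]
          ring
  have hG : IntegrableOn G (Ioi 0) :=
    (integrableOn_pow_mul_exp_neg_mul_Ioi 0 hb).add (integrableOn_pow_mul_exp_neg_mul_Ioi k hb)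
  calc ‖∫ t in Ioi 0, F t‖ = ‖∫ s in Ioi 0, F (s + c)‖ := by rw [hshift]
    _ ≤ ∫ s in Ioi 0, Q * G s :=
        norm_integral_le_of_norm_le (hG.const_mul Q) ((ae_restrict_iff' measurableSet_Ioi).2
          (.of_forall hdom))
    _ = Q * (1 / b + k ! / b ^ (k + 1)) := by
        rw [integral_const_mul, integral_add (integrableOn_pow_mul_exp_neg_mul_Ioi 0 hb)
          (integrableOn_pow_mul_exp_neg_mul_Ioi k hb), integral_pow_mul_exp_neg_mul_Ioi 0 hb,
          integral_pow_mul_exp_neg_mul_Ioi k hb]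
        simp

theorem inv_add_factorial_div_pow_le {y b : ℝ} (k : ℕ) (hy : 0 < y) (hyb : y ≤ b) :
    1 / b + k ! / b ^ (k + 1) ≤ k ! * (y ^ (-(k : ℝ) - 1) + y⁻¹) := by
  have hinv : 1 / b ≤ y⁻¹ := by rw [one_div]; exact inv_anti₀ hy hyb
  have hpow : 1 / b ^ (k + 1) ≤ y ^ (-(k : ℝ) - 1) := by
    rw [show -(k : ℝ) - 1 = -((k + 1 : ℕ) : ℝ) by push_cast; ring, Real.rpow_neg hy.le,
      Real.rpow_natCast, one_div]
    exact inv_anti₀ (by positivity) (pow_le_pow_left₀ hy.le hyb _)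
  have hfact : (1 : ℝ) ≤ k ! := mod_cast k.factorial_pos
  calc 1 / b + k ! / b ^ (k + 1) = 1 / b + k ! * (1 / b ^ (k + 1)) := by ring
    _ ≤ k ! * y⁻¹ + k ! * y ^ (-(k : ℝ) - 1) := by
        gcongr
        exact hinv.trans (le_mul_of_one_le_left (by positivity) hfact)
    _ = k ! * (y ^ (-(k : ℝ) - 1) + y⁻¹) := by ring

theorem norm_integral_Ioi_le_of_spectral_gap {F : ℝ → E} {K a y : ℝ} {k : ℕ} (hK : 0 ≤ K)
    (ha : 0 < a) (hy : 0 < y) (hzero : ∀ t ∈ Ioo 0 (a / 2), F t = 0)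
    (hbound : ∀ t, 0 < t → ‖F t‖ ≤ K * (1 + t) ^ k * Real.exp (-(2 * π * y * t))) :
    ‖∫ t in Ioi 0, F t‖ ≤
      K * (1 + a / 2) ^ k * 2 ^ (k - 1) * k ! * (y ^ (-(k : ℝ) - 1) + y⁻¹) *
        Real.exp (-π * a * y) := by
  have hb : 0 < 2 * π * y := by positivity
  have hyb : y ≤ 2 * π * y := by nlinarith [Real.pi_gt_three]
  calc ‖∫ t in Ioi 0, F t‖
      ≤ K * (1 + a / 2) ^ k * 2 ^ (k - 1) * Real.exp (-(2 * π * y * (a / 2))) *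
          (1 / (2 * π * y) + k ! / (2 * π * y) ^ (k + 1)) :=
        norm_integral_Ioi_le_of_eq_zero_on_Ioo hK hb (by positivity) hzero hbound
    _ ≤ K * (1 + a / 2) ^ k * 2 ^ (k - 1) * Real.exp (-(2 * π * y * (a / 2))) *
          (k ! * (y ^ (-(k : ℝ) - 1) + y⁻¹)) := by
        gcongr; exact inv_add_factorial_div_pow_le k hy hyb
    _ = _ := by rw [show -(2 * π * y * (a / 2)) = -π * a * y by ring]; ring

end LaplaceBound

theorem norm_cexp_two_pi_I_mul (z : ℂ) (t : ℝ) :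
    ‖Complex.exp (2 * π * I * z * t)‖ = Real.exp (-(2 * π * z.im * t)) := by
  rw [Complex.norm_exp]
  congr 1
  simp [mul_re, mul_im]

theorem stmt_4_general (g : ℝ → ℂ) (K a : ℝ) (k : ℕ) (ha : 0 < a)
    (hbound : ∀ t : ℝ, ‖g t‖ ≤ K * (1 + |t|)^k)
    (hvanish : ∀ t ∈ Set.Ioo (-(a/2)) (a/2), g t = 0)
    (f : ℂ → ℂ)
    (hfp : ∀ z : ℂ, 0 < z.im →
      f z = -∫ t in Set.Ioi (0:ℝ), g t * Complex.exp (2 * Real.pi * Complex.I * z * (t:ℂ)))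
    (hfm : ∀ z : ℂ, z.im < 0 →
      f z = ∫ t in Set.Iio (0:ℝ), g t * Complex.exp (2 * Real.pi * Complex.I * z * (t:ℂ))) :
    ∃ C : ℝ, ∀ (x y : ℝ), y ≠ 0 →
      ‖f (x + y * Complex.I)‖ ≤
        C * (|y| ^ (-(k:ℝ) - 1) + |y|⁻¹) * Real.exp (-Real.pi * a * |y|) := by
  have hK : 0 ≤ K := by simpa using (norm_nonneg _).trans (hbound 0)
  refine ⟨K * (1 + a / 2) ^ k * 2 ^ (k - 1) * k !, fun x y hy => ?_⟩
  have him : (x + y * I).im = y := by simp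
  rcases hy.lt_or_gt with hy | hy
  · rw [hfm _ (by rwa [him]), ← integral_Iic_eq_integral_Iio, ← neg_zero, ← integral_comp_neg_Ioi,
      abs_of_neg hy]
    refine norm_integral_Ioi_le_of_spectral_gap hK ha (neg_pos.2 hy) (fun t ht => ?_)
      fun t ht => ?_
    · rw [hvanish (-t) ⟨by linarith [ht.2], by linarith [ht.1]⟩, zero_mul]
    · have hgt := hbound (-t)
      rw [abs_neg, abs_of_pos ht] at hgt
      rw [norm_mul, norm_cexp_two_pi_I_mul, him,
        show -(2 * π * y * -t) = -(2 * π * -y * t) by ring]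
      exact mul_le_mul_of_nonneg_right hgt (Real.exp_nonneg _)
  · rw [hfp _ (by rwa [him]), norm_neg, abs_of_pos hy]
    refine norm_integral_Ioi_le_of_spectral_gap hK ha hy
      (fun t ht => ?_) fun t ht => ?_
    · rw [hvanish t ⟨by linarith [ht.1], ht.2⟩, zero_mul]
    · have hgt := hbound t
      rw [abs_of_pos ht] at hgt
      rw [norm_mul, norm_cexp_two_pi_I_mul, him]
      exact mul_le_mul_of_nonneg_right hgt (Real.exp_nonneg _)

/-- decay of the Fourier-Carleman transform in presence of a spectral gap. -/
theorem stmt_4 (g : ℝ → ℂ) (K a : ℝ) (k : ℕ) (ha : 0 < a)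
    (hcont : Continuous g) (hbound : ∀ t : ℝ, ‖g t‖ ≤ K * (1 + |t|)^k)
    (hvanish : ∀ t ∈ Set.Ioo (-(a/2)) (a/2), g t = 0)
    (f : ℂ → ℂ)
    (hfp : ∀ z : ℂ, 0 < z.im →
      f z = -∫ t in Set.Ioi (0:ℝ), g t * Complex.exp (2 * Real.pi * Complex.I * z * (t:ℂ)))
    (hfm : ∀ z : ℂ, z.im < 0 →
      f z = ∫ t in Set.Iio (0:ℝ), g t * Complex.exp (2 * Real.pi * Complex.I * z * (t:ℂ))) :
    ∃ C : ℝ, ∀ (x y : ℝ), y ≠ 0 →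
      ‖f (x + y * Complex.I)‖ ≤
        C * (|y| ^ (-(k:ℝ) - 1) + |y|⁻¹) * Real.exp (-Real.pi * a * |y|) :=
  stmt_4_general g K a k ha hbound hvanish f hfp hfm
end
end

section
/- For Im z ≠ 0 and k ≥ 0, suppose ĝ(t) = Σ_{p=0}^{k} (2πit)^p Σ_{λ∈Γ} c_p(λ) e^{-2πiλt} with Σ_{p,λ} |c_p(λ)| < ∞, Γ ⊂ ℝ locally finite, and ĝ vanishing on (-a/2, a/2). Then the Fourier–Carleman transform f(z) (defined as -∫_0^∞ ĝ(t)e^{2πizt}dt for Im z > 0 and ∫_{-∞}^0 ĝ(t)e^{2πizt}dt for Im z < 0) equals the Cauchy transform: f(z) = (1/(2πi)) Σ_{p=0}^{k} Σ_{λ∈Γ} c_p(λ) p! (-1)^p / (z-λ)^{p+1} for all z ∈ ℂ \ ℝ. -/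
open MeasureTheory SchwartzMap Complex Filter

noncomputable section

/-!
On the half-line where `e^{2πizt}` decays, each term `(2πit)^p e^{2πi(z-λ)t}` of the integrand
is a Gamma integral `∫₀^∞ t^p e^{wt} dt = p! / (-w)^(p+1)`, with `Re w = -2π|Im z|` independent
of `λ`. This uniform decay together with `∑ |c_p(λ)| < ∞` justifies integrating term by term.
The lower half-plane reduces to the upper one by `t ↦ -t`, which turns `2πi` into `-2πi`.
-/

open Set Topology

theorem LocallyFinite'.countable {Λ : Set ℝ} (h : LocallyFinite' Λ) : Λ.Countable := by
  have hcover : Λ = ⋃ n, Λ ∩ compactCovering ℝ n := by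
    rw [← inter_iUnion, iUnion_compactCovering, inter_univ]
  rw [hcover]
  exact countable_iUnion fun n => (h _ (isCompact_compactCovering ℝ n)).countable

theorem norm_pow_mul_cexp_mul_ofReal (p : ℕ) (w : ℂ) (t : ℝ) :
    ‖(t : ℂ) ^ p * cexp (w * t)‖ = |t| ^ p * Real.exp (w.re * t) := by
  rw [norm_mul, norm_pow, norm_real, Real.norm_eq_abs, Complex.norm_exp, re_mul_ofReal]

theorem integrableOn_Ioi_pow_mul_exp_neg_mul {b : ℝ} (hb : 0 < b) (p : ℕ) :
    IntegrableOn (fun t : ℝ => t ^ p * Real.exp (-b * t)) (Ioi 0) := by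
  refine (integrableOn_rpow_mul_exp_neg_mul_rpow (s := p) (p := 1)
    (neg_one_lt_zero.trans_le p.cast_nonneg) one_pos hb).congr_fun (fun t _ => ?_) measurableSet_Ioi
  simp only [Real.rpow_natCast, Real.rpow_one]

theorem integrableOn_Ioi_pow_mul_cexp {w : ℂ} (hw : w.re < 0) (p : ℕ) :
    IntegrableOn (fun t : ℝ => (t : ℂ) ^ p * cexp (w * t)) (Ioi 0) := by
  refine (integrableOn_Ioi_pow_mul_exp_neg_mul (neg_pos.2 hw) p).mono' (by fun_prop) ?_
  filter_upwards [self_mem_ae_restrict measurableSet_Ioi] with t ht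
  rw [norm_pow_mul_cexp_mul_ofReal, abs_of_pos ht, neg_neg]

theorem tendsto_pow_mul_cexp_atTop {w : ℂ} (hw : w.re < 0) (p : ℕ) :
    Tendsto (fun t : ℝ => (t : ℂ) ^ p * cexp (w * t)) atTop (𝓝 0) := by
  rw [tendsto_zero_iff_norm_tendsto_zero]
  refine (tendsto_rpow_mul_exp_neg_mul_atTop_nhds_zero p (-w.re) (neg_pos.2 hw)).congr' ?_
  filter_upwards [eventually_ge_atTop 0] with t ht
  rw [norm_pow_mul_cexp_mul_ofReal, abs_of_nonneg ht, Real.rpow_natCast, neg_neg]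

theorem integral_Ioi_pow_mul_cexp {w : ℂ} (hw : w.re < 0) (p : ℕ) :
    ∫ t in Ioi (0 : ℝ), (t : ℂ) ^ p * cexp (w * t) = p.factorial / (-w) ^ (p + 1) := by
  have hw0 : w ≠ 0 := by rintro rfl; simp at hw
  induction p with
  | zero => simp [integral_exp_mul_complex_Ioi hw, div_neg, neg_div]
  | succ p ih =>
    have hu (x : ℝ) :
        HasDerivAt (fun t : ℝ => (t : ℂ) ^ (p + 1)) ((p + 1 : ℂ) * (x : ℂ) ^ p) x := by
      simpa using (hasDerivAt_pow (p + 1) (x : ℂ)).comp_ofReal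
    have hv (x : ℝ) : HasDerivAt (fun t : ℝ => cexp (w * t) / w) (cexp (w * x)) x := by
      simpa [hw0, mul_comm] using
        (((hasDerivAt_id (x : ℂ)).const_mul w).comp_ofReal.cexp).div_const w
    have hu'v :
        IntegrableOn (fun t : ℝ => (p + 1 : ℂ) * (t : ℂ) ^ p * (cexp (w * t) / w)) (Ioi 0) :=
      IntegrableOn.congr_fun ((integrableOn_Ioi_pow_mul_cexp hw p).const_mul ((p + 1 : ℂ) / w))
        (fun t _ => by ring) measurableSet_Ioi
    have hzero :
        Tendsto (fun t : ℝ => (t : ℂ) ^ (p + 1) * (cexp (w * t) / w)) (𝓝[>] 0) (𝓝 0) := by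
      have : Continuous fun t : ℝ => (t : ℂ) ^ (p + 1) * (cexp (w * t) / w) := by fun_prop
      simpa using this.continuousWithinAt (x := 0) |>.tendsto
    have hinfty :
        Tendsto (fun t : ℝ => (t : ℂ) ^ (p + 1) * (cexp (w * t) / w)) atTop (𝓝 0) := by
      simpa only [zero_div, mul_div_assoc] using (tendsto_pow_mul_cexp_atTop hw (p + 1)).div_const w
    have hparts := integral_Ioi_mul_deriv_eq_deriv_mul (fun x _ => hu x) (fun x _ => hv x)
      (integrableOn_Ioi_pow_mul_cexp hw (p + 1)) hu'v hzero hinfty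
    have hscale : ∫ t in Ioi (0 : ℝ), (p + 1 : ℂ) * (t : ℂ) ^ p * (cexp (w * t) / w)
        = (p + 1) / w * ∫ t in Ioi (0 : ℝ), (t : ℂ) ^ p * cexp (w * t) := by
      rw [← integral_const_mul]
      congr 1 with t
      ring
    have hpow : (-w) ^ (p + 1) ≠ 0 := pow_ne_zero _ (neg_ne_zero.2 hw0)
    rw [hparts, hscale, ih, Nat.factorial_succ, pow_succ (-w) (p + 1)]
    push_cast
    field_simp
    ring

theorem integral_Ioi_sum_tsum_pow_mul_cexp {S : Type*} [Countable S] (P : Finset ℕ)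
    (d : ℕ → S → ℂ) (hd : ∀ p ∈ P, Summable fun s => ‖d p s‖) {b : ℝ} (hb : 0 < b)
    {w : S → ℂ} (hw : ∀ s, (w s).re = -b) :
    ∫ t in Ioi (0 : ℝ), ∑ p ∈ P, ∑' s, d p s * ((t : ℂ) ^ p * cexp (w s * t))
      = ∑' s, ∑ p ∈ P, d p s * (p.factorial / (-w s) ^ (p + 1)) := by
  set F : S → ℝ → ℂ := fun s t => ∑ p ∈ P, d p s * ((t : ℂ) ^ p * cexp (w s * t))
  have hw_neg (s : S) : (w s).re < 0 := by linarith [hw s]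
  have hnorm (s : S) (p : ℕ) (t : ℝ) :
      ‖(t : ℂ) ^ p * cexp (w s * t)‖ = |t| ^ p * Real.exp (-b * t) := by
    rw [norm_pow_mul_cexp_mul_ofReal, hw]
  have hswap (t : ℝ) :
      ∑ p ∈ P, ∑' s, d p s * ((t : ℂ) ^ p * cexp (w s * t)) = ∑' s, F s t :=
    (Summable.tsum_finsetSum fun p hp =>
      ((hd p hp).mul_right (|t| ^ p * Real.exp (-b * t))).of_norm_bounded
        fun s => by rw [norm_mul, hnorm]).symm
  have hint (s : S) : Integrable (F s) (volume.restrict (Ioi 0)) :=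
    integrable_finsetSum _ fun p _ => (integrableOn_Ioi_pow_mul_cexp (hw_neg s) p).const_mul _
  set A : ℕ → ℝ := fun p => ∫ t in Ioi (0 : ℝ), t ^ p * Real.exp (-b * t)
  have hbound (s : S) : ∫ t in Ioi (0 : ℝ), ‖F s t‖ ≤ ∑ p ∈ P, ‖d p s‖ * A p := by
    simp only [A, ← integral_const_mul]
    rw [← integral_finsetSum _ fun p _ => (integrableOn_Ioi_pow_mul_exp_neg_mul hb p).const_mul _]
    refine integral_mono_of_nonneg (.of_forall fun t => norm_nonneg _)
      (integrable_finsetSum _ fun p _ => (integrableOn_Ioi_pow_mul_exp_neg_mul hb p).const_mul _) ?_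
    filter_upwards [self_mem_ae_restrict measurableSet_Ioi] with t ht
    refine (norm_sum_le _ _).trans (le_of_eq (Finset.sum_congr rfl fun p _ => ?_))
    rw [norm_mul, hnorm, abs_of_pos ht]
  have hsum : Summable fun s => ∫ t in Ioi (0 : ℝ), ‖F s t‖ :=
    (summable_sum fun p hp => (hd p hp).mul_right (A p)).of_nonneg_of_le
      (fun s => integral_nonneg fun _ => norm_nonneg _) hbound
  rw [funext hswap, ← integral_tsum_of_summable_integral_norm hint hsum]
  refine tsum_congr fun s => ?_
  rw [integral_finsetSum _ fun p _ => (integrableOn_Ioi_pow_mul_cexp (hw_neg s) p).const_mul _]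
  simp only [integral_const_mul, integral_Ioi_pow_mul_cexp (hw_neg s)]

theorem integral_Ioi_expPolynomial_mul_cexp {Γ : Set ℝ} [Countable Γ] (P : Finset ℕ)
    (c : ℕ → ℝ → ℂ) (hsum : Summable fun lam : Γ => ∑ p ∈ P, ‖c p lam‖)
    {v z : ℂ} (hv : v.re = 0) (hvz : (v * z).re < 0) (g : ℝ → ℂ)
    (hg : ∀ t : ℝ, g t = ∑ p ∈ P, (v * t) ^ p *
      ∑' lam : Γ, c p lam * cexp (-v * lam * t)) :
    ∫ t in Ioi (0 : ℝ), g t * cexp (v * z * t) = -(1 / v) * ∑' lam : Γ, ∑ p ∈ P,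
          c p lam * p.factorial * (-1) ^ p / (z - (lam : ℝ)) ^ (p + 1) := by
  have hw (lam : Γ) : (v * (z - (lam : ℝ))).re = (v * z).re := by
    simp [mul_sub, hv]
  have hv0 : v ≠ 0 := by rintro rfl; simp at hvz
  have hzl (lam : Γ) : z - (lam : ℝ) ≠ 0 := by
    intro h
    simpa [h] using (hw lam).trans_lt hvz
  have hc (p : ℕ) (hp : p ∈ P) : Summable fun lam : Γ => ‖c p lam * v ^ p‖ := by
    have hcp : Summable fun lam : Γ => ‖c p lam‖ :=
      hsum.of_nonneg_of_le (fun _ => norm_nonneg _) fun lam =>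
        Finset.single_le_sum (f := fun q => ‖c q lam‖) (fun q _ => norm_nonneg _) hp
    simpa only [norm_mul, norm_pow] using hcp.mul_right (‖v‖ ^ p)
  have hexpand (t : ℝ) :
      g t * cexp (v * z * t) = ∑ p ∈ P, ∑' lam : Γ,
        c p lam * v ^ p * ((t : ℂ) ^ p * cexp (v * (z - (lam : ℝ)) * t)) := by
    rw [hg, Finset.sum_mul]
    refine Finset.sum_congr rfl fun p _ => ?_
    rw [← tsum_mul_left, ← tsum_mul_right]
    refine tsum_congr fun lam => ?_
    rw [show v * (z - (lam : ℝ)) * t = -v * lam * t + v * z * t by ring, Complex.exp_add]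
    ring
  rw [funext hexpand, integral_Ioi_sum_tsum_pow_mul_cexp P _ hc (neg_pos.2 hvz) fun lam => by
    rw [hw, neg_neg], ← tsum_mul_left]
  refine tsum_congr fun lam => ?_
  rw [Finset.mul_sum]
  refine Finset.sum_congr rfl fun p _ => ?_
  -- move the sign out of the denominator, using `((-1) ^ (p + 1))⁻¹ = (-1) ^ (p + 1)`
  rw [neg_eq_neg_one_mul, mul_pow, mul_pow, div_mul_eq_div_div_swap,
    div_eq_mul_inv _ ((-1 : ℂ) ^ (p + 1)), ← inv_pow, inv_neg_one]
  field_simp [hzl lam]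
  ring

theorem stmt_5_general (Γ : Set ℝ) (hΓ : LocallyFinite' Γ) (k : ℕ) (c : ℕ → ℝ → ℂ)
    (hsum : Summable fun lam : Γ => ∑ p ∈ Finset.range (k+1), ‖c p lam‖)
    (g : ℝ → ℂ)
    (hg : ∀ t : ℝ, g t = ∑ p ∈ Finset.range (k+1), (2 * Real.pi * Complex.I * (t:ℂ))^p *
      ∑' lam : Γ, c p (lam : ℝ) * Complex.exp (-2 * Real.pi * Complex.I * ((lam:ℝ):ℂ) * (t:ℂ)))
    (f : ℂ → ℂ)
    (hfp : ∀ z : ℂ, 0 < z.im →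
      f z = -∫ t in Set.Ioi (0:ℝ), g t * Complex.exp (2 * Real.pi * Complex.I * z * (t:ℂ)))
    (hfm : ∀ z : ℂ, z.im < 0 →
      f z = ∫ t in Set.Iio (0:ℝ), g t * Complex.exp (2 * Real.pi * Complex.I * z * (t:ℂ))) :
    ∀ z : ℂ, z.im ≠ 0 →
      f z = (1 / (2 * Real.pi * Complex.I)) *
        ∑' lam : Γ, ∑ p ∈ Finset.range (k+1),
          c p (lam : ℝ) * (p.factorial : ℂ) * (-1)^p / (z - ((lam:ℝ):ℂ))^(p+1) := by
  have : Countable Γ := hΓ.countable.to_subtype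
  intro z hz
  rcases hz.lt_or_gt with hneg | hpos
  · have hreflect := integral_comp_neg_Ioi 0 fun t => g t * cexp (2 * Real.pi * I * z * t)
    rw [neg_zero] at hreflect
    calc f z = ∫ t in Ioi (0 : ℝ), g (-t) * cexp (-(2 * Real.pi * I) * z * t) := by
          rw [hfm z hneg, ← integral_Iic_eq_integral_Iio, ← hreflect]
          simp only [ofReal_neg, mul_neg, neg_mul]
      _ = _ := by
          rw [integral_Ioi_expPolynomial_mul_cexp _ c hsum (by simp)
            (by simpa using mul_neg_of_pos_of_neg Real.two_pi_pos hneg) _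
            fun t => by simp only [hg, ofReal_neg, mul_neg, neg_mul, neg_neg]]
          rw [div_neg, neg_neg]
  · rw [hfp z hpos, integral_Ioi_expPolynomial_mul_cexp _ c hsum (by simp)
      (by simpa using mul_pos Real.two_pi_pos hpos) g fun t => by simp only [hg, neg_mul]]
    rw [neg_mul, neg_neg]

/-- the Fourier-Carleman transform equals the Cauchy transform. -/
theorem stmt_5 (Γ : Set ℝ) (hΓ : LocallyFinite' Γ) (k : ℕ) (c : ℕ → ℝ → ℂ)
    (hsum : Summable fun lam : Γ => ∑ p ∈ Finset.range (k+1), ‖c p lam‖)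
    (a : ℝ) (ha : 0 < a) (g : ℝ → ℂ)
    (hg : ∀ t : ℝ, g t = ∑ p ∈ Finset.range (k+1), (2 * Real.pi * Complex.I * (t:ℂ))^p *
      ∑' lam : Γ, c p (lam : ℝ) * Complex.exp (-2 * Real.pi * Complex.I * ((lam:ℝ):ℂ) * (t:ℂ)))
    (hvanish : ∀ t ∈ Set.Ioo (-(a/2)) (a/2), g t = 0)
    (f : ℂ → ℂ)
    (hfp : ∀ z : ℂ, 0 < z.im →
      f z = -∫ t in Set.Ioi (0:ℝ), g t * Complex.exp (2 * Real.pi * Complex.I * z * (t:ℂ)))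
    (hfm : ∀ z : ℂ, z.im < 0 →
      f z = ∫ t in Set.Iio (0:ℝ), g t * Complex.exp (2 * Real.pi * Complex.I * z * (t:ℂ))) :
    ∀ z : ℂ, z.im ≠ 0 →
      f z = (1 / (2 * Real.pi * Complex.I)) *
        ∑' lam : Γ, ∑ p ∈ Finset.range (k+1),
          c p (lam : ℝ) * (p.factorial : ℂ) * (-1)^p / (z - ((lam:ℝ):ℂ))^(p+1) :=
  stmt_5_general Γ hΓ k c hsum g hg f hfp hfm
end
end

section
/- Let f(x) = Σ_{p=0}^{k} (2πix)^p Σ_{λ∈Λ} b_p(λ) e^{-2πiλx} with Λ ⊂ ℝ locally finite and Σ_{p,λ} |b_p(λ)| < ∞. For u ∈ ℝ define g(x,u) = f(x)·conj(f(x-u)). Then g(x,u) = Σ_{l=0}^{2k} (2πix)^l Σ_{h∈Λ-Λ} A_{h,l}(u) e^{-2πihx}, where A_{h,l}(u) = Σ_{(p,q,j)∈J(k,l)} (-1)^{p+j} C(p,j) (2πiu)^j Σ_{λ∈Λ_h} b_q(λ+h) conj(b_p(λ)) e^{-2πiλu}, J(k,l) is the set of triples (p,q,j) ∈ ℤ³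 with 0 ≤ p,q ≤ k, 0 ≤ j ≤ p, p+q-j = l, and Λ_h = Λ ∩ (Λ - h). Moreover Σ_{l=0}^{2k} Σ_{h∈Λ-Λ} |A_{h,l}(u)| < ∞ for each u. -/
open MeasureTheory SchwartzMap Complex Filter

noncomputable section

/-! Writing `conj (2πi(x - u)) = 2πiu - 2πix` and expanding its `p`-th power binomially, the
product `f(x) · conj f(x - u)` becomes a finite sum of products of two absolutely convergent
series over `Λ`. Each such product is a series over `Λ × Λ`, which is regrouped by the frequency
`h = μ - λ` through the bijection `(h, λ) ↦ (λ + h, λ)` from `Σ h ∈ Λ - Λ, Λ_h` onto `Λ × Λ`;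
absolute convergence justifies the regrouping and also bounds `Σ_h |A_{h,l}(u)|` by
`Σ_{p,q} (Σ_μ |b_q(μ)|) (Σ_λ |b_p(λ)|)`. Collecting the powers of `2πix` by `l = p + q - j` gives
the coefficients `A_{h,l}(u)`. -/

open Finset ComplexConjugate

section DifferenceSet

variable {G : Type*} [AddCommGroup G] (Λ : Set G)

abbrev DiffSet : Type _ := {d : G // ∃ y ∈ Λ, ∃ y' ∈ Λ, d = y' - y}

abbrev DiffFiber (h : G) : Type _ := {x : G // x ∈ Λ ∧ x + h ∈ Λ}

def diffSigmaEquiv : (Σ h : DiffSet Λ, DiffFiber Λ h) ≃ Λ × Λ where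
  toFun s := (⟨s.2 + s.1, s.2.2.2⟩, ⟨s.2, s.2.2.1⟩)
  invFun z := ⟨⟨z.1 - z.2, z.2, z.2.2, z.1, z.1.2, rfl⟩, ⟨z.2, z.2.2, by simp⟩⟩
  left_inv s := Sigma.subtype_ext (Subtype.ext (add_sub_cancel_left _ _)) rfl
  right_inv z := Prod.ext (Subtype.ext (add_sub_cancel _ _)) rfl

variable {R : Type*} [NormedRing R] {f g : G → R}

lemma summable_norm_mul_diffSigma (hf : Summable fun μ : Λ => ‖f μ‖)
    (hg : Summable fun μ : Λ => ‖g μ‖) :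
    Summable fun s : Σ h : DiffSet Λ, DiffFiber Λ h => ‖f (s.2 + s.1) * g s.2‖ :=
  ((diffSigmaEquiv Λ).summable_iff.2 (hf.mul_norm hg) :)

lemma summable_norm_tsum_diffFiber (hf : Summable fun μ : Λ => ‖f μ‖)
    (hg : Summable fun μ : Λ => ‖g μ‖) :
    Summable fun h : DiffSet Λ => ‖∑' a : DiffFiber Λ h, f (a + h) * g a‖ := by
  have hF := summable_norm_mul_diffSigma Λ hf hg
  refine .of_nonneg_of_le (fun _ => norm_nonneg _) (fun h => ?_) hF.sigma
  exact norm_tsum_le_tsum_norm (hF.sigma_factor h)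

lemma tsum_mul_tsum_eq_tsum_diffSet [CompleteSpace R] (hf : Summable fun μ : Λ => ‖f μ‖)
    (hg : Summable fun μ : Λ => ‖g μ‖) :
    (∑' μ : Λ, f μ) * (∑' μ : Λ, g μ) =
      ∑' (h : DiffSet Λ) (a : DiffFiber Λ h), f (a + h) * g a := by
  rw [tsum_mul_tsum_of_summable_norm hf hg, ← (diffSigmaEquiv Λ).tsum_eq]
  exact (summable_norm_mul_diffSigma Λ hf hg).of_norm.tsum_sigma

end DifferenceSet

def freqExp (t x : ℝ) : ℂ := exp (-2 * Real.pi * I * t * x)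

lemma exp_eq_freqExp (t x : ℝ) : exp (-2 * Real.pi * I * t * x) = freqExp t x := rfl

lemma norm_freqExp (t x : ℝ) : ‖freqExp t x‖ = 1 := by
  rw [freqExp, show -2 * Real.pi * I * t * x = ((-2 * Real.pi * t * x : ℝ) : ℂ) * I by
    push_cast; ring]
  exact norm_exp_ofReal_mul_I _

lemma freqExp_add_mul_conj_freqExp_sub (a h x u : ℝ) :
    freqExp (a + h) x * conj (freqExp a (x - u)) = freqExp a u * freqExp h x := by
  simp only [freqExp, ← exp_conj, ← exp_add, map_mul, map_neg, conj_ofReal, conj_I, map_ofNat]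
  congr 1
  push_cast
  ring

def shiftCoeff (u : ℝ) (p j : ℕ) : ℂ :=
  (-1) ^ (p + j) * (p.choose j : ℂ) * (2 * Real.pi * I * u) ^ j

lemma conj_two_pi_I_mul_sub_pow (x u : ℝ) (p : ℕ) :
    conj (2 * Real.pi * I * ((x - u : ℝ) : ℂ)) ^ p =
      ∑ j ∈ range (p + 1), shiftCoeff u p j * (2 * Real.pi * I * x) ^ (p - j) := by
  have hconj : conj (2 * Real.pi * I * ((x - u : ℝ) : ℂ)) =
      2 * Real.pi * I * u - 2 * Real.pi * I * x := by
    simp only [map_mul, conj_ofReal, conj_I, map_ofNat]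
    push_cast
    ring
  rw [hconj, sub_pow]
  refine sum_congr rfl fun j _ => ?_
  rw [shiftCoeff, add_comm j p]
  ring

section Autocorrelation

variable (Λ : Set ℝ) (b : ℕ → ℝ → ℂ) (u : ℝ)

def crossCoeff (p q : ℕ) (h : ℝ) : ℂ :=
  ∑' a : DiffFiber Λ h, b q (a + h) * conj (b p a) * freqExp a u

variable {Λ b} {p q : ℕ}

lemma summable_norm_crossCoeff (hp : Summable fun μ : Λ => ‖b p μ‖)
    (hq : Summable fun μ : Λ => ‖b q μ‖) :
    Summable fun h : DiffSet Λ => ‖crossCoeff Λ b u p q h‖ := by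
  refine summable_norm_tsum_diffFiber Λ (f := b q) (g := fun t => conj (b p t) * freqExp t u)
    hq ?_ |>.congr fun h => ?_
  · simpa only [norm_mul, RCLike.norm_conj, norm_freqExp, mul_one] using hp
  · simp only [crossCoeff, mul_assoc]

lemma summable_crossCoeff_mul_freqExp (hp : Summable fun μ : Λ => ‖b p μ‖)
    (hq : Summable fun μ : Λ => ‖b q μ‖) (x : ℝ) :
    Summable fun h : DiffSet Λ => crossCoeff Λ b u p q h * freqExp h x :=
  .of_norm <| by
    simpa only [norm_mul, norm_freqExp, mul_one] using summable_norm_crossCoeff u hp hq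

lemma tsum_mul_conj_tsum_eq_tsum_crossCoeff (hp : Summable fun μ : Λ => ‖b p μ‖)
    (hq : Summable fun μ : Λ => ‖b q μ‖) (x : ℝ) :
    (∑' μ : Λ, b q μ * freqExp μ x) * conj (∑' μ : Λ, b p μ * freqExp μ (x - u)) =
      ∑' h : DiffSet Λ, crossCoeff Λ b u p q h * freqExp h x := by
  rw [conj_tsum, tsum_mul_tsum_eq_tsum_diffSet Λ (f := fun t => b q t * freqExp t x)
    (g := fun t => conj (b p t * freqExp t (x - u)))]
  · refine tsum_congr fun h => ?_
    rw [crossCoeff, ← tsum_mul_right]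
    refine tsum_congr fun a => ?_
    rw [map_mul, mul_mul_mul_comm, freqExp_add_mul_conj_freqExp_sub]
    ring
  · simpa only [norm_mul, norm_freqExp, mul_one] using hq
  · simpa only [norm_mul, RCLike.norm_conj, norm_freqExp, mul_one] using hp

lemma mul_conj_sub_eq_sum_crossCoeff {k : ℕ}
    (hb : ∀ p ∈ range (k + 1), Summable fun μ : Λ => ‖b p μ‖) {f : ℝ → ℂ}
    (hf : ∀ x : ℝ, f x = ∑ p ∈ range (k + 1), (2 * Real.pi * I * x) ^ p *
      ∑' μ : Λ, b p μ * freqExp μ x) (x : ℝ) :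
    f x * conj (f (x - u)) = ∑ q ∈ range (k + 1), ∑ p ∈ range (k + 1), ∑ j ∈ range (p + 1),
      shiftCoeff u p j * ((2 * Real.pi * I * x) ^ (p + q - j) *
        ∑' h : DiffSet Λ, crossCoeff Λ b u p q h * freqExp h x) := by
  rw [hf, hf, map_sum, sum_mul_sum]
  refine sum_congr rfl fun q hq => sum_congr rfl fun p hp => ?_
  rw [map_mul, map_pow, mul_mul_mul_comm,
    tsum_mul_conj_tsum_eq_tsum_crossCoeff u (hb p hp) (hb q hq), conj_two_pi_I_mul_sub_pow,
    mul_sum, sum_mul]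
  refine sum_congr rfl fun j hj => ?_
  rw [show p + q - j = q + (p - j) by grind, pow_add]
  ring

lemma tsum_sum_shiftCoeff_mul_crossCoeff_mul_freqExp (s : Finset (ℕ × ℕ × ℕ))
    (hs : ∀ v ∈ s, (Summable fun μ : Λ => ‖b v.1 μ‖) ∧ Summable fun μ : Λ => ‖b v.2.1 μ‖)
    (x : ℝ) :
    ∑' h : DiffSet Λ,
        (∑ v ∈ s, shiftCoeff u v.1 v.2.2 * crossCoeff Λ b u v.1 v.2.1 h) * freqExp h x =
      ∑ v ∈ s, shiftCoeff u v.1 v.2.2 *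
        ∑' h : DiffSet Λ, crossCoeff Λ b u v.1 v.2.1 h * freqExp h x := by
  simp_rw [sum_mul, mul_assoc]
  rw [Summable.tsum_finsetSum fun v hv =>
    (summable_crossCoeff_mul_freqExp u (hs v hv).1 (hs v hv).2 x).mul_left _]
  exact sum_congr rfl fun v _ => tsum_mul_left

lemma summable_sum_norm_sum_shiftCoeff_mul_crossCoeff (L : Finset ℕ)
    (J : ℕ → Finset (ℕ × ℕ × ℕ)) (hJ : ∀ l ∈ L, ∀ v ∈ J l,
      (Summable fun μ : Λ => ‖b v.1 μ‖) ∧ Summable fun μ : Λ => ‖b v.2.1 μ‖) :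
    Summable fun h : DiffSet Λ =>
      ∑ l ∈ L, ‖∑ v ∈ J l, shiftCoeff u v.1 v.2.2 * crossCoeff Λ b u v.1 v.2.1 h‖ := by
  refine .of_nonneg_of_le (fun _ => sum_nonneg fun _ _ => norm_nonneg _)
    (fun h => sum_le_sum fun l _ =>
      (norm_sum_le _ _).trans (sum_le_sum fun v _ => norm_mul_le _ _))
    (summable_sum fun l hl => summable_sum fun v hv => ?_)
  exact (summable_norm_crossCoeff u (hJ l hl v hv).1 (hJ l hl v hv).2).mul_left _

end Autocorrelation

lemma sum_range_sum_filter_eq_sum_sum_sum {M : Type*} [AddCommMonoid M] (k : ℕ)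
    (T : ℕ → ℕ → ℕ → M) :
    ∑ l ∈ range (2 * k + 1), ∑ v ∈ (range (k + 1) ×ˢ range (k + 1) ×ˢ range (k + 1)).filter
      (fun v => v.2.2 ≤ v.1 ∧ v.1 + v.2.1 = l + v.2.2), T v.1 v.2.1 v.2.2 =
    ∑ q ∈ range (k + 1), ∑ p ∈ range (k + 1), ∑ j ∈ range (p + 1), T p q j := by
  set S := range (k + 1) ×ˢ range (k + 1) ×ˢ range (k + 1)
  have hfiber : ∀ l, S.filter (fun v => v.2.2 ≤ v.1 ∧ v.1 + v.2.1 = l + v.2.2) =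
      (S.filter fun v => v.2.2 ≤ v.1).filter fun v => v.1 + v.2.1 - v.2.2 = l := fun l => by
    rw [filter_filter]
    exact filter_congr fun v _ => by omega
  simp_rw [hfiber]
  refine (sum_fiberwise_of_maps_to (t := range (2 * k + 1))
    (g := fun v : ℕ × ℕ × ℕ => v.1 + v.2.1 - v.2.2) (fun v hv => ?_)
    fun v : ℕ × ℕ × ℕ => T v.1 v.2.1 v.2.2).trans ?_
  · simp only [S, mem_filter, mem_product, mem_range] at hv ⊢
    omega
  rw [sum_filter, sum_product]
  simp_rw [sum_product]
  rw [sum_comm]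
  refine sum_congr rfl fun q _ => sum_congr rfl fun p hp => ?_
  rw [← sum_filter]
  congr 1
  ext j
  simp only [mem_filter, mem_range] at hp ⊢
  omega

theorem stmt_17_general (Λ : Set ℝ) (k : ℕ) (b : ℕ → ℝ → ℂ)
    (hsum : Summable fun lam : Λ => ∑ p ∈ Finset.range (k+1), ‖b p lam‖)
    (f : ℝ → ℂ)
    (hf : ∀ x : ℝ, f x = ∑ p ∈ Finset.range (k+1), (2 * Real.pi * Complex.I * (x:ℂ))^p *
      ∑' lam : Λ, b p (lam : ℝ) * Complex.exp (-2 * Real.pi * Complex.I * ((lam:ℝ):ℂ) * (x:ℂ)))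
    (J : ℕ → Finset (ℕ × ℕ × ℕ))
    (hJ : ∀ l : ℕ, J l = (Finset.range (k+1) ×ˢ Finset.range (k+1) ×ˢ Finset.range (k+1)).filter
      (fun pqj => pqj.2.2 ≤ pqj.1 ∧ pqj.1 + pqj.2.1 = l + pqj.2.2))
    (A : ℝ → ℕ → ℝ → ℂ)
    (hA : ∀ (h : ℝ) (l : ℕ) (u : ℝ), A h l u =
      ∑ pqj ∈ J l, (-1 : ℂ)^(pqj.1 + pqj.2.2) * ((pqj.1.choose pqj.2.2 : ℕ) : ℂ) *
        (2 * Real.pi * Complex.I * (u:ℂ))^(pqj.2.2) *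
        ∑' lam : {x : ℝ // x ∈ Λ ∧ x + h ∈ Λ},
          b pqj.2.1 ((lam : ℝ) + h) * starRingEnd ℂ (b pqj.1 (lam : ℝ)) *
            Complex.exp (-2 * Real.pi * Complex.I * ((lam:ℝ):ℂ) * (u:ℂ))) :
    ∀ u : ℝ,
      (∀ x : ℝ, f x * starRingEnd ℂ (f (x - u)) =
        ∑ l ∈ Finset.range (2*k+1), (2 * Real.pi * Complex.I * (x:ℂ))^l *
          ∑' h : {d : ℝ // ∃ y ∈ Λ, ∃ y' ∈ Λ, d = y' - y},
            A (h : ℝ) l u * Complex.exp (-2 * Real.pi * Complex.I * ((h:ℝ):ℂ) * (x:ℂ))) ∧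
      Summable (fun h : {d : ℝ // ∃ y ∈ Λ, ∃ y' ∈ Λ, d = y' - y} =>
        ∑ l ∈ Finset.range (2*k+1), ‖A (h : ℝ) l u‖) := by
  intro u
  simp only [exp_eq_freqExp] at hf hA ⊢
  have hb : ∀ p ∈ range (k + 1), Summable fun μ : Λ => ‖b p μ‖ := fun p hp =>
    hsum.of_nonneg_of_le (fun _ => norm_nonneg _) fun μ =>
      single_le_sum (f := fun p => ‖b p μ‖) (fun _ _ => norm_nonneg _) hp
  have hJb : ∀ l, ∀ v ∈ J l,
      (Summable fun μ : Λ => ‖b v.1 μ‖) ∧ Summable fun μ : Λ => ‖b v.2.1 μ‖ := fun l v hv => by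
    simp only [hJ, mem_filter, mem_product] at hv
    exact ⟨hb _ hv.1.1, hb _ hv.1.2.1⟩
  have hA' : ∀ h l, A h l u = ∑ v ∈ J l, shiftCoeff u v.1 v.2.2 * crossCoeff Λ b u v.1 v.2.1 h :=
    fun h l => hA h l u
  simp only [hA']
  refine ⟨fun x => ?_, summable_sum_norm_sum_shiftCoeff_mul_crossCoeff u _ J fun l _ => hJb l⟩
  rw [mul_conj_sub_eq_sum_crossCoeff u hb hf, ← sum_range_sum_filter_eq_sum_sum_sum]
  refine sum_congr rfl fun l _ => ?_
  rw [tsum_sum_shiftCoeff_mul_crossCoeff_mul_freqExp u _ (hJb l), ← hJ, mul_sum]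
  refine sum_congr rfl fun v hv => ?_
  obtain ⟨-, -, hl⟩ := by simpa only [hJ, mem_filter] using hv
  rw [show v.1 + v.2.1 - v.2.2 = l by omega, mul_left_comm]

/-- expansion of g(x,u) = f(x)·conj(f(x-u)). -/
theorem stmt_17 (Λ : Set ℝ) (hΛ : LocallyFinite' Λ) (k : ℕ) (b : ℕ → ℝ → ℂ)
    (hsum : Summable fun lam : Λ => ∑ p ∈ Finset.range (k+1), ‖b p lam‖)
    (f : ℝ → ℂ)
    (hf : ∀ x : ℝ, f x = ∑ p ∈ Finset.range (k+1), (2 * Real.pi * Complex.I * (x:ℂ))^p *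
      ∑' lam : Λ, b p (lam : ℝ) * Complex.exp (-2 * Real.pi * Complex.I * ((lam:ℝ):ℂ) * (x:ℂ)))
    (J : ℕ → Finset (ℕ × ℕ × ℕ))
    (hJ : ∀ l : ℕ, J l = (Finset.range (k+1) ×ˢ Finset.range (k+1) ×ˢ Finset.range (k+1)).filter
      (fun pqj => pqj.2.2 ≤ pqj.1 ∧ pqj.1 + pqj.2.1 = l + pqj.2.2))
    (A : ℝ → ℕ → ℝ → ℂ)
    (hA : ∀ (h : ℝ) (l : ℕ) (u : ℝ), A h l u =
      ∑ pqj ∈ J l, (-1 : ℂ)^(pqj.1 + pqj.2.2) * ((pqj.1.choose pqj.2.2 : ℕ) : ℂ) *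
        (2 * Real.pi * Complex.I * (u:ℂ))^(pqj.2.2) *
        ∑' lam : {x : ℝ // x ∈ Λ ∧ x + h ∈ Λ},
          b pqj.2.1 ((lam : ℝ) + h) * starRingEnd ℂ (b pqj.1 (lam : ℝ)) *
            Complex.exp (-2 * Real.pi * Complex.I * ((lam:ℝ):ℂ) * (u:ℂ))) :
    ∀ u : ℝ,
      (∀ x : ℝ, f x * starRingEnd ℂ (f (x - u)) =
        ∑ l ∈ Finset.range (2*k+1), (2 * Real.pi * Complex.I * (x:ℂ))^l *
          ∑' h : {d : ℝ // ∃ y ∈ Λ, ∃ y' ∈ Λ, d = y' - y},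
            A (h : ℝ) l u * Complex.exp (-2 * Real.pi * Complex.I * ((h:ℝ):ℂ) * (x:ℂ))) ∧
      Summable (fun h : {d : ℝ // ∃ y ∈ Λ, ∃ y' ∈ Λ, d = y' - y} =>
        ∑ l ∈ Finset.range (2*k+1), ‖A (h : ℝ) l u‖) :=
  stmt_17_general Λ k b hsum f hf J hJ A hA
end
end
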